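/- arXiv:1709.03765 — 6 statements merged into one kernel-verified Lean document; each statement's English description precedes it below -/
import Mathlib

section
/- A polynomial G over F_{2^n} is an o-polynomial (i.e., G is a permutation and each G_s is a permutation, where G_s(t) = (G(t+s)+G(s))/t for t ≠ 0 and G_s(0) = 0) if and only if for every a ∈ F_{2^n} and every nonzero b ∈ F_{2^n}, the equation G(x) + b·x = a has exactly 0 or 2 solutions in F_{2^n}. -/
open scoped Classical
open Finset

noncomputable instance (n : ℕ) : Fintype (GaloisField 2 n) := Fintype.ofFinite _

/-- The absolute trace from `GF(2^n)` to `GF(2)`. -/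
noncomputable def tr (n : ℕ) (x : GaloisField 2 n) : ZMod 2 :=
  Algebra.trace (ZMod 2) (GaloisField 2 n) x

/-- The Walsh transform of `F` at `(u, v)`. -/
noncomputable def W (n : ℕ) (F : GaloisField 2 n → GaloisField 2 n)
    (u v : GaloisField 2 n) : ℤ :=
  ∑ x : GaloisField 2 n, (-1 : ℤ) ^ (tr n (v * F x) + tr n (u * x)).val

/-- `F` is an o-polynomial: for every nonzero `b` and every `a`, the equation
`F x + b * x = a` has 0 or 2 solutions. -/
def IsOPoly (n : ℕ) (F : GaloisField 2 n → GaloisField 2 n) : Prop :=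
  ∀ b : GaloisField 2 n, b ≠ 0 → ∀ a : GaloisField 2 n,
    Nat.card {x : GaloisField 2 n // F x + b * x = a} = 0 ∨
    Nat.card {x : GaloisField 2 n // F x + b * x = a} = 2

theorem o_polynomial_iff_zero_or_two_solutions (n : ℕ) (hn : 0 < n)
    (G : GaloisField 2 n → GaloisField 2 n) :
    (Function.Bijective G ∧ ∀ s : GaloisField 2 n,
      Function.Bijective (fun t : GaloisField 2 n =>
        if t ≠ 0 then (G (t + s) + G s) * t⁻¹ else 0)) ↔
    (∀ a : GaloisField 2 n, ∀ b : GaloisField 2 n, b ≠ 0 →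
      Nat.card {x : GaloisField 2 n // G x + b * x = a} = 0 ∨
      Nat.card {x : GaloisField 2 n // G x + b * x = a} = 2) := by
  have h2 : (2 : GaloisField 2 n) = 0 := by
    exact_mod_cast CharP.cast_eq_zero (GaloisField 2 n) 2
  have hadd : ∀ x y : GaloisField 2 n, x + y = 0 ↔ x = y := by
    intro x y
    constructor
    · intro h; linear_combination h - y * h2
    · rintro rfl; linear_combination x * h2
  constructor
  · rintro ⟨hG, hGs⟩ a b hb
    rw [Nat.card_eq_fintype_card, Fintype.card_subtype]
    by_cases hne : (univ.filter (fun x => G x + b * x = a)).Nonempty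
    · right
      obtain ⟨x0, hx0m⟩ := hne
      have hx0 : G x0 + b * x0 = a := (mem_filter.mp hx0m).2
      obtain ⟨t, ht⟩ := (hGs x0).surjective b
      have ht0 : t ≠ 0 := by
        rintro rfl
        simp only [ne_eq, not_true_eq_false, if_neg, ite_false] at ht
        exact hb (by simpa using ht.symm)
      simp only [if_pos ht0] at ht
      have key : G (t + x0) + G x0 = b * t := by
        have hk := congrArg (· * t) ht
        simp only [mul_assoc, inv_mul_cancel₀ ht0, mul_one] at hk
        exact hk
      have hx1 : G (x0 + t) + b * (x0 + t) = a := by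
        rw [add_comm x0 t]
        linear_combination key + hx0 + (b * t - G x0) * h2
      have hx1ne : x0 + t ≠ x0 := by
        intro h
        exact ht0 (by linear_combination h)
      have hfil : univ.filter (fun x => G x + b * x = a) = {x0, x0 + t} := by
        ext y
        simp only [mem_filter, mem_univ, true_and, mem_insert, mem_singleton]
        constructor
        · intro hy
          by_cases hyx : y = x0
          · exact Or.inl hyx
          · right
            have hty : y + x0 ≠ 0 := fun h => hyx ((hadd y x0).mp h)
            have hval : (fun t : GaloisField 2 n =>
                if t ≠ 0 then (G (t + x0) + G x0) * t⁻¹ else 0) (y + x0) = b := by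
              simp only [if_pos hty]
              have hyx0 : y + x0 + x0 = y := by
                linear_combination x0 * h2
              rw [hyx0]
              have hnum : G y + G x0 = b * (y + x0) := by
                linear_combination hy + hx0 + (a - b * y - b * x0) * h2
              rw [hnum, mul_assoc, mul_inv_cancel₀ hty, mul_one]
            have hval' : (fun t : GaloisField 2 n =>
                if t ≠ 0 then (G (t + x0) + G x0) * t⁻¹ else 0) t = b := by
              simp only [if_pos ht0]; exact ht
            have := (hGs x0).injective (hval.trans hval'.symm)
            linear_combination this - x0 * h2
        · rintro (rfl | rfl)
          · exact hx0
          · exact hx1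
      rw [hfil, card_insert_of_notMem (by simp only [mem_singleton]; exact fun h => hx1ne h.symm), card_singleton]
    · left
      rw [not_nonempty_iff_eq_empty] at hne
      rw [hne, card_empty]
  · intro hcond
    -- first: each G_s is bijective
    have hGs : ∀ s : GaloisField 2 n,
        Function.Bijective (fun t : GaloisField 2 n =>
          if t ≠ 0 then (G (t + s) + G s) * t⁻¹ else 0) := by
      intro s
      rw [← Finite.injective_iff_bijective, Finite.injective_iff_surjective]
      intro b
      by_cases hb : b = 0
      · exact ⟨0, by simp [hb]⟩
      · set a := G s + b * s with ha
        have hspos : Nat.card {x : GaloisField 2 n // G x + b * x = a} ≠ 0 := by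
          have : Nonempty {x : GaloisField 2 n // G x + b * x = a} := ⟨⟨s, rfl⟩⟩
          simp [Nat.card_pos.ne']
        have hc2 : Nat.card {x : GaloisField 2 n // G x + b * x = a} = 2 :=
          ((hcond a b hb).resolve_left hspos)
        rw [Nat.card_eq_fintype_card] at hc2
        obtain ⟨⟨y, hy⟩, hys'⟩ := Fintype.exists_ne_of_one_lt_card (α := {x : GaloisField 2 n // G x + b * x = a}) (by omega) ⟨s, rfl⟩
        have hys : y ≠ s := fun h => hys' (Subtype.ext h)
        refine ⟨y + s, ?_⟩
        have hts : y + s ≠ 0 := fun h => hys ((hadd y s).mp h)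
        simp only [if_pos hts]
        have hys0 : y + s + s = y := by linear_combination s * h2
        rw [hys0]
        have hnum : G y + G s = b * (y + s) := by
          linear_combination hy + ha + (G s - b * y) * h2
        rw [hnum, mul_assoc, mul_inv_cancel₀ hts, mul_one]
    refine ⟨?_, hGs⟩
    rw [← Finite.injective_iff_bijective]
    intro x y hxy
    by_contra hne
    have hts : x + y ≠ 0 := fun h => hne ((hadd x y).mp h)
    have h1 : (fun t : GaloisField 2 n =>
        if t ≠ 0 then (G (t + y) + G y) * t⁻¹ else 0) (x + y) = 0 := by
      simp only [if_pos hts]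
      have hxyy : x + y + y = x := by linear_combination y * h2
      rw [hxyy, hxy]
      have : G y + G y = 0 := by linear_combination G y * h2
      rw [this, zero_mul]
    have h0 : (fun t : GaloisField 2 n =>
        if t ≠ 0 then (G (t + y) + G y) * t⁻¹ else 0) (0 : GaloisField 2 n) = 0 := by
      simp
    exact hts ((hGs y).injective (h1.trans h0.symm))
end

section
/- A function F : F_{2^n} → F_{2^n} is an o-polynomial if and only if the sum over all a ∈ F_{2^n} and nonzero b ∈ F_{2^n} of (N(a,b)^3 − 4·N(a,b)^2 + 4·N(a,b)) equals 0, where N(a,b) = |{x : F(x) + b·x + a = 0}|. Moreover this sum is always ≥ 0. -/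
open scoped Classical
open Finset

lemma cubic_factor (N : ℤ) : N ^ 3 - 4 * N ^ 2 + 4 * N = N * (N - 2) ^ 2 := by ring

lemma cubic_nonneg (N : ℕ) :
    0 ≤ (N : ℤ) ^ 3 - 4 * (N : ℤ) ^ 2 + 4 * (N : ℤ) := by
  rw [cubic_factor]
  positivity

lemma cubic_eq_zero_iff (N : ℕ) :
    (N : ℤ) ^ 3 - 4 * (N : ℤ) ^ 2 + 4 * (N : ℤ) = 0 ↔ N = 0 ∨ N = 2 := by
  rw [cubic_factor, mul_eq_zero, pow_eq_zero_iff (by norm_num), sub_eq_zero]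
  constructor
  · rintro (h | h)
    · left; exact_mod_cast h
    · right; exact_mod_cast h
  · rintro (h | h) <;> subst h <;> simp

lemma set_eq (n : ℕ) (F : GaloisField 2 n → GaloisField 2 n) (a b : GaloisField 2 n) :
    {x : GaloisField 2 n // F x + b * x + a = 0} = {x : GaloisField 2 n // F x + b * x = a} := by
  have : ∀ x : GaloisField 2 n, (F x + b * x + a = 0) ↔ (F x + b * x = a) := by
    intro x
    rw [add_eq_zero_iff_eq_neg, CharTwo.neg_eq]
  simp only [this]

theorem o_polynomial_iff_cubic_sum_eq_zero (n : ℕ) (hn : 0 < n)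
    (F : GaloisField 2 n → GaloisField 2 n) :
    (IsOPoly n F ↔
      ∑ a : GaloisField 2 n, ∑ b ∈ univ.filter (fun b : GaloisField 2 n => b ≠ 0),
        ((Nat.card {x : GaloisField 2 n // F x + b * x + a = 0} : ℤ) ^ 3
          - 4 * (Nat.card {x : GaloisField 2 n // F x + b * x + a = 0} : ℤ) ^ 2
          + 4 * (Nat.card {x : GaloisField 2 n // F x + b * x + a = 0} : ℤ)) = 0) ∧
    0 ≤ ∑ a : GaloisField 2 n, ∑ b ∈ univ.filter (fun b : GaloisField 2 n => b ≠ 0),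
        ((Nat.card {x : GaloisField 2 n // F x + b * x + a = 0} : ℤ) ^ 3
          - 4 * (Nat.card {x : GaloisField 2 n // F x + b * x + a = 0} : ℤ) ^ 2
          + 4 * (Nat.card {x : GaloisField 2 n // F x + b * x + a = 0} : ℤ)) := by
  have hnn : ∀ a : GaloisField 2 n, 0 ≤ ∑ b ∈ univ.filter (fun b : GaloisField 2 n => b ≠ 0),
      ((Nat.card {x : GaloisField 2 n // F x + b * x + a = 0} : ℤ) ^ 3
        - 4 * (Nat.card {x : GaloisField 2 n // F x + b * x + a = 0} : ℤ) ^ 2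
        + 4 * (Nat.card {x : GaloisField 2 n // F x + b * x + a = 0} : ℤ)) := fun a =>
    Finset.sum_nonneg fun b _ => cubic_nonneg _
  have hpos : 0 ≤ ∑ a : GaloisField 2 n, ∑ b ∈ univ.filter (fun b : GaloisField 2 n => b ≠ 0),
      ((Nat.card {x : GaloisField 2 n // F x + b * x + a = 0} : ℤ) ^ 3
        - 4 * (Nat.card {x : GaloisField 2 n // F x + b * x + a = 0} : ℤ) ^ 2
        + 4 * (Nat.card {x : GaloisField 2 n // F x + b * x + a = 0} : ℤ)) :=
    Finset.sum_nonneg fun a _ => hnn a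
  refine ⟨?_, hpos⟩
  rw [Finset.sum_eq_zero_iff_of_nonneg fun a _ => hnn a]
  constructor
  · intro hF a _
    rw [Finset.sum_eq_zero_iff_of_nonneg fun b _ => cubic_nonneg _]
    intro b hb
    rw [Finset.mem_filter] at hb
    rw [cubic_eq_zero_iff, set_eq]
    exact hF b hb.2 a
  · intro h b hb a
    have := h a (Finset.mem_univ a)
    rw [Finset.sum_eq_zero_iff_of_nonneg fun b _ => cubic_nonneg _] at this
    have := this b (Finset.mem_filter.mpr ⟨Finset.mem_univ b, hb⟩)
    rw [cubic_eq_zero_iff, set_eq] at this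
    exact this
end

section
/- Let F : F_{2^n} → F_{2^n} and define the Walsh transform W_F(u,v) = Σ_{x ∈ F_{2^n}} (−1)^{tr_n(v·F(x)) + tr_n(u·x)}. Then for every integer j ≥ 1, Σ_{a ∈ F_{2^n}} Σ_{b ∈ F_{2^n}, b ≠ 0} |{x : F(x) + bx + a = 0}|^j = 2^{−(j−1)n} · Σ_{b ≠ 0} Σ_{v_1,...,v_j ∈ F_{2^n}, v_1 + ... + v_j = 0} Π_{i=1}^{j} W_F(b·v_i, v_i). -/
open scoped Classical
open Finset

/-! Counting solutions with the additive character `ψ x = (-1) ^ tr x`, whose orthogonality gives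
`2 ^ n * #{x | F x + b * x = a} = ∑ v, ψ (-(v * a)) * W_F(b v, v)`. Raising this to the `j`-th
power and summing over `a`, orthogonality once more kills every tuple `(v₁, …, v_j)` whose sum is
nonzero. -/

namespace AddChar

variable {A M : Type*} [AddCommMonoid A] [CommMonoid M]

lemma map_sum_eq_prod {ι : Type*} (ψ : AddChar A M) (s : Finset ι) (f : ι → A) :
    ψ (∑ i ∈ s, f i) = ∏ i ∈ s, ψ (f i) := by
  induction s using Finset.cons_induction with
  | empty => simp
  | cons i s hi ih => rw [sum_cons, prod_cons, map_add_eq_mul, ih]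

section CharSum

variable {R R' : Type*} [CommRing R] [Fintype R] [DecidableEq R] [CommRing R'] [IsDomain R']

def charSum (ψ : AddChar R R') (G : R → R) (v : R) : R' :=
  ∑ x, ψ (v * G x)

namespace IsPrimitive

variable {ψ : AddChar R R'}

theorem card_mul_card_fiber_eq_sum (hψ : ψ.IsPrimitive) (G : R → R) (a : R) :
    (Fintype.card R : R') * #{x | G x = a} = ∑ v, ψ (-(v * a)) * ψ.charSum G v := by
  have orthogonality (x : R) : ∑ v, ψ (-(v * a)) * ψ (v * G x) =
      if G x - a = 0 then (Fintype.card R : R') else 0 := by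
    simpa only [Nat.cast_ite, Nat.cast_zero, ← map_add_eq_mul, mul_sub, neg_add_eq_sub]
      using sum_mulShift (G x - a) hψ
  simp_rw [charSum, mul_sum]
  rw [sum_comm]
  simp_rw [orthogonality, sub_eq_zero, ← sum_filter, sum_const, nsmul_eq_mul, mul_comm]

theorem card_pow_mul_sum_card_fiber_pow (hψ : ψ.IsPrimitive) (G : R → R) (j : ℕ) :
    (Fintype.card R : R') ^ j * ∑ a, (#{x | G x = a} : R') ^ j =
      Fintype.card R * ∑ v ∈ (univ : Finset (Fin j → R)).filter (fun v => ∑ i, v i = 0),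
        ∏ i, ψ.charSum G (v i) := by
  calc (Fintype.card R : R') ^ j * ∑ a, (#{x | G x = a} : R') ^ j
      = ∑ a, ∑ v : Fin j → R, ∏ i, (ψ (-(v i * a)) * ψ.charSum G (v i)) := by
        simp_rw [mul_sum, ← mul_pow, hψ.card_mul_card_fiber_eq_sum, Fintype.sum_pow]
    _ = ∑ v : Fin j → R, (∑ a, ψ (a * -∑ i, v i)) * ∏ i, ψ.charSum G (v i) := by
        rw [sum_comm]
        refine sum_congr rfl fun v _ => ?_
        simp_rw [prod_mul_distrib, sum_mul, ← map_sum_eq_prod, mul_neg, mul_sum,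
          ← sum_neg_distrib, mul_comm]
    _ = _ := by
        simp_rw [sum_mulShift _ hψ, neg_eq_zero, Nat.cast_ite, Nat.cast_zero, ite_mul,
          zero_mul, ← sum_filter, mul_sum]

end IsPrimitive

end CharSum

end AddChar

def zmodTwoSignChar : AddChar (ZMod 2) ℤ where
  toFun s := (-1) ^ s.val
  map_zero_eq_one' := rfl
  map_add_eq_mul' := by decide

noncomputable def traceSignChar (L : Type*) [Field L] [Algebra (ZMod 2) L] : AddChar L ℤ :=
  zmodTwoSignChar.compAddMonoidHom (Algebra.trace (ZMod 2) L).toAddMonoidHom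

lemma traceSignChar_apply (L : Type*) [Field L] [Algebra (ZMod 2) L] (x : L) :
    traceSignChar L x = (-1) ^ (Algebra.trace (ZMod 2) L x).val :=
  rfl

theorem isPrimitive_traceSignChar (L : Type*) [Field L] [Finite L] [Algebra (ZMod 2) L] :
    (traceSignChar L).IsPrimitive := by
  refine AddChar.IsPrimitive.of_ne_one (AddChar.ne_one_iff.2 ?_)
  obtain ⟨x, hx⟩ : ∃ x, Algebra.trace (ZMod 2) L x ≠ 0 :=
    DFunLike.ne_iff.1 (Algebra.trace_ne_zero (ZMod 2) L)
  have htrace : Algebra.trace (ZMod 2) L x = 1 := by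
    generalize Algebra.trace (ZMod 2) L x = s at hx
    revert s
    decide
  exact ⟨x, by rw [traceSignChar_apply, htrace]; decide⟩

theorem W_eq_charSum (n : ℕ) (F : GaloisField 2 n → GaloisField 2 n) (b v : GaloisField 2 n) :
    W n F (b * v) v = (traceSignChar (GaloisField 2 n)).charSum (fun x => F x + b * x) v := by
  simp only [W, AddChar.charSum, tr, traceSignChar_apply, mul_add, map_add, mul_assoc,
    mul_left_comm v b]

lemma natCard_add_eq_zero {α R : Type*} [Fintype α] [AddGroup R] [DecidableEq R] (G : α → R)
    (a : R) : Nat.card {x // G x + a = 0} = #{x | G x = -a} := by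
  rw [Nat.card_eq_fintype_card, Fintype.card_subtype]
  simp_rw [add_eq_zero_iff_eq_neg]

theorem two_pow_pow_mul_sum_card_pow_eq_walsh (n : ℕ) (hn : 0 < n)
    (F : GaloisField 2 n → GaloisField 2 n) (b : GaloisField 2 n) (j : ℕ) :
    ((2 : ℤ) ^ n) ^ j * ∑ a, (Nat.card {x // F x + b * x + a = 0} : ℤ) ^ j =
      2 ^ n * ∑ v ∈ (univ : Finset (Fin j → GaloisField 2 n)).filter (fun v => ∑ i, v i = 0),
        ∏ i, W n F (b * v i) (v i) := by
  have hcard : Fintype.card (GaloisField 2 n) = 2 ^ n := by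
    rw [← Nat.card_eq_fintype_card, GaloisField.card 2 n hn.ne']
  have reindex : ∑ a, (#{x | F x + b * x = -a} : ℤ) ^ j = ∑ a, (#{x | F x + b * x = a} : ℤ) ^ j :=
    Fintype.sum_equiv (Equiv.neg _) _ _ fun a => rfl
  have moment := (isPrimitive_traceSignChar (GaloisField 2 n)).card_pow_mul_sum_card_fiber_pow
    (fun x => F x + b * x) j
  simp_rw [← W_eq_charSum, hcard, Nat.cast_pow, Nat.cast_ofNat] at moment
  simp_rw [natCard_add_eq_zero, reindex]
  exact moment

theorem power_moment_as_walsh_sum_general (n : ℕ) (hn : 0 < n)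
    (F : GaloisField 2 n → GaloisField 2 n) (j : ℕ) :
    ∑ a : GaloisField 2 n, ∑ b ∈ univ.filter (fun b : GaloisField 2 n => b ≠ 0),
        (Nat.card {x : GaloisField 2 n // F x + b * x + a = 0} : ℚ) ^ j =
      (2 : ℚ) ^ (-(((j : ℤ) - 1) * n)) *
        ∑ b ∈ univ.filter (fun b : GaloisField 2 n => b ≠ 0),
          ∑ v ∈ (univ : Finset (Fin j → GaloisField 2 n)).filter
              (fun v => ∑ i, v i = 0),
            ∏ i, (W n F (b * v i) (v i) : ℚ) := by
  have hscale : (2 : ℚ) ^ (-(((j : ℤ) - 1) * n)) = 2 ^ n / (2 ^ n) ^ j := by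
    rw [div_eq_mul_inv, ← pow_mul, ← zpow_natCast, ← zpow_natCast, ← zpow_neg,
      ← zpow_add₀ two_ne_zero]
    congr 1
    push_cast
    ring
  rw [sum_comm, hscale, mul_sum]
  refine sum_congr rfl fun b _ => ?_
  rw [div_mul_eq_mul_div, eq_div_iff (by positivity), mul_comm]
  exact_mod_cast two_pow_pow_mul_sum_card_pow_eq_walsh n hn F b j

theorem power_moment_as_walsh_sum (n : ℕ) (hn : 0 < n)
    (F : GaloisField 2 n → GaloisField 2 n) (j : ℕ) (hj : 1 ≤ j) :
    ∑ a : GaloisField 2 n, ∑ b ∈ univ.filter (fun b : GaloisField 2 n => b ≠ 0),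
        (Nat.card {x : GaloisField 2 n // F x + b * x + a = 0} : ℚ) ^ j =
      (2 : ℚ) ^ (-(((j : ℤ) - 1) * n)) *
        ∑ b ∈ univ.filter (fun b : GaloisField 2 n => b ≠ 0),
          ∑ v ∈ (univ : Finset (Fin j → GaloisField 2 n)).filter
              (fun v => ∑ i, v i = 0),
            ∏ i, (W n F (b * v i) (v i) : ℚ) :=
  power_moment_as_walsh_sum_general n hn F j
end

section
/- Let F : F_{2^n} → F_{2^n} be any function with Walsh transform W_F. Then Σ_{b ∈ F_{2^n}^*} Σ_{v_1, v_2 ∈ F_{2^n}} W_F(b v_1, v_1)·W_F(b v_2, v_2)·W_F(b(v_1+v_2), v_1+v_2) + 2^{n+2}·Σ_{v ∈ F_{2^n}^*} W_F(0,v)^2 − 2^{4n+2} + 2^{3n+2} ≥ 0, and equality holds if and only if F is an o-polynomial. -/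
open scoped Classical
open Finset

/-!
Write `N_b(a)` for the number of solutions of `F x + b x = a` and `q = 2^n`. Fourier inversion
for the trace character turns the triple Walsh sum at slope `b` into `q² Σ_a N_b(a)³` and
`Σ_v W_F(0,v)²` into `q Σ_a N_0(a)²`, while counting the triples `(b, x, y)` with
`F x + b x = F y + b y` gives `Σ_b Σ_a N_b(a)² = 2q² - q`. Together, the left-hand side equals
`q² Σ_{b ≠ 0} Σ_a N_b(a) (N_b(a) - 2)²`, a sum of non-negative terms that vanishes exactly when
every `N_b(a)` with `b ≠ 0` is `0` or `2`.
-/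

section FiberCard

variable {α β : Type*} [Fintype α]

noncomputable def fiberCard (G : α → β) (b : β) : ℕ := #{x | G x = b}

variable [Fintype β]

lemma sum_comp_eq_sum_fiberCard_mul {M : Type*} [Semiring M] (G : α → β) (f : β → M) :
    ∑ x, f (G x) = ∑ b, fiberCard G b * f b := by
  simp only [fiberCard, ← nsmul_eq_mul, ← sum_const]
  exact (sum_fiberwise' univ G f).symm

lemma sum_fiberCard (G : α → β) : ∑ b, fiberCard G b = Fintype.card α := by
  simpa using (sum_comp_eq_sum_fiberCard_mul G (fun _ => (1 : ℕ))).symm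

lemma sum_fiberCard_sq (G : α → β) : ∑ b, fiberCard G b ^ 2 = ∑ x, #{y | G y = G x} := by
  simp only [sq]
  exact (sum_comp_eq_sum_fiberCard_mul G (fiberCard G)).symm

end FiberCard

lemma AddChar.int_map_neg {A : Type*} [AddGroup A] (ψ : AddChar A ℤ) (a : A) :
    ψ (-a) = ψ a := by
  have h : ψ (-a) * ψ a = 1 := by
    rw [← AddChar.map_add_eq_mul, neg_add_cancel, AddChar.map_zero_eq_one]
  rcases Int.mul_eq_one_iff_eq_one_or_neg_one.mp h with ⟨h₁, h₂⟩ | ⟨h₁, h₂⟩ <;> rw [h₁, h₂]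

section CharSum

variable {α R : Type*} [Fintype α] [CommRing R]

def charSum (ψ : AddChar R ℤ) (G : α → R) (v : R) : ℤ := ∑ x, ψ (v * G x)

lemma charSum_zero (ψ : AddChar R ℤ) (G : α → R) : charSum ψ G 0 = Fintype.card α := by
  simp [charSum]

variable [Fintype R] {ψ : AddChar R ℤ}

lemma sum_charSum_mul (hψ : ψ.IsPrimitive) (G : α → R) (w : R) :
    ∑ v, charSum ψ G v * ψ (v * w) = Fintype.card R * fiberCard G w := by
  have hψw : ∀ v x, ψ (v * G x) * ψ (v * w) = ψ (v * (G x - w)) := fun v x => by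
    rw [← ψ.int_map_neg (v * w), ← AddChar.map_add_eq_mul, mul_sub, sub_eq_add_neg]
  calc ∑ v, charSum ψ G v * ψ (v * w)
      = ∑ x, ∑ v, ψ (v * (G x - w)) := by
        simp only [charSum, sum_mul, hψw]
        exact sum_comm
    _ = ∑ x, if G x = w then (Fintype.card R : ℤ) else 0 := by
        simp only [AddChar.sum_mulShift _ hψ, sub_eq_zero, Nat.cast_ite, Nat.cast_zero]
    _ = Fintype.card R * fiberCard G w := by
        rw [sum_ite, sum_const_zero, add_zero, sum_const, nsmul_eq_mul, mul_comm, fiberCard]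

lemma sum_charSum_sq (hψ : ψ.IsPrimitive) (G : α → R) :
    ∑ v, charSum ψ G v ^ 2 = Fintype.card R * ∑ b, (fiberCard G b : ℤ) ^ 2 := by
  calc ∑ v, charSum ψ G v ^ 2
      = ∑ x, ∑ v, charSum ψ G v * ψ (v * G x) := by
        simp only [sq, charSum, mul_sum]
        exact sum_comm
    _ = ∑ x, (Fintype.card R : ℤ) * fiberCard G (G x) := by
        simp only [sum_charSum_mul hψ]
    _ = Fintype.card R * ∑ b, (fiberCard G b : ℤ) ^ 2 := by
        rw [← mul_sum, sum_comp_eq_sum_fiberCard_mul G (fun b => (fiberCard G b : ℤ))]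
        simp only [sq]

lemma sum_charSum_mul_charSum_mul_charSum_add (hψ : ψ.IsPrimitive) (G : α → R) :
    ∑ v₁, ∑ v₂, charSum ψ G v₁ * charSum ψ G v₂ * charSum ψ G (v₁ + v₂)
      = Fintype.card R ^ 2 * ∑ b, (fiberCard G b : ℤ) ^ 3 := by
  have hadd : ∀ v₁ v₂, charSum ψ G (v₁ + v₂) = ∑ x, ψ (v₁ * G x) * ψ (v₂ * G x) := by
    simp only [charSum, add_mul, AddChar.map_add_eq_mul, implies_true]
  calc ∑ v₁, ∑ v₂, charSum ψ G v₁ * charSum ψ G v₂ * charSum ψ G (v₁ + v₂)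
      = ∑ v₁, ∑ v₂, ∑ x, charSum ψ G v₁ * ψ (v₁ * G x) * (charSum ψ G v₂ * ψ (v₂ * G x)) := by
        refine sum_congr rfl fun v₁ _ => sum_congr rfl fun v₂ _ => ?_
        rw [hadd, mul_sum]
        exact sum_congr rfl fun x _ => by ring
    _ = ∑ x, ∑ v₁, ∑ v₂, charSum ψ G v₁ * ψ (v₁ * G x) * (charSum ψ G v₂ * ψ (v₂ * G x)) :=
        (sum_congr rfl fun _ _ => sum_comm).trans sum_comm
    _ = ∑ x, (∑ v₁, charSum ψ G v₁ * ψ (v₁ * G x)) * ∑ v₂, charSum ψ G v₂ * ψ (v₂ * G x) := by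
        simp only [sum_mul_sum]
    _ = ∑ x, ((Fintype.card R : ℤ) * fiberCard G (G x)) ^ 2 := by
        simp only [sum_charSum_mul hψ, sq]
    _ = Fintype.card R ^ 2 * ∑ b, (fiberCard G b : ℤ) ^ 3 := by
        rw [mul_sum,
          sum_comp_eq_sum_fiberCard_mul G fun b => ((Fintype.card R : ℤ) * fiberCard G b) ^ 2]
        exact sum_congr rfl fun b _ => by ring

end CharSum

section Field

variable {K : Type*} [Field K] [Fintype K]

lemma card_filter_add_mul_eq_add_mul (F : K → K) (x y : K) :
    #{b | F y + b * y = F x + b * x} = if x = y then Fintype.card K else 1 := by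
  split_ifs with hxy
  · simp [hxy]
  · rw [card_eq_one]
    refine ⟨(F x - F y) / (y - x), ?_⟩
    ext b
    simp only [mem_filter, mem_univ, true_and, mem_singleton]
    rw [eq_div_iff (sub_ne_zero.mpr (Ne.symm hxy))]
    constructor <;> intro h <;> linear_combination h

lemma sum_sum_fiberCard_add_mul_sq (F : K → K) :
    ∑ b, ∑ a, (fiberCard (fun x => F x + b * x) a : ℤ) ^ 2
      = 2 * Fintype.card K ^ 2 - Fintype.card K := by
  have hpairs : ∑ b, ∑ a, fiberCard (fun x => F x + b * x) a ^ 2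
      = ∑ x : K, ∑ y : K, if x = y then Fintype.card K else 1 :=
    calc ∑ b, ∑ a, fiberCard (fun x => F x + b * x) a ^ 2
        = ∑ b, ∑ x, ∑ y, if F y + b * y = F x + b * x then 1 else 0 := by
          simp only [sum_fiberCard_sq, card_filter]
      _ = ∑ x, ∑ y, ∑ b, if F y + b * y = F x + b * x then 1 else 0 :=
          sum_comm.trans (sum_congr rfl fun _ _ => sum_comm)
      _ = ∑ x : K, ∑ y : K, if x = y then Fintype.card K else 1 := by
          simp only [← card_filter, card_filter_add_mul_eq_add_mul]
  have hrow : ∀ x : K, ∑ y : K, (if x = y then (Fintype.card K : ℤ) else 1)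
      = 2 * Fintype.card K - 1 := by
    intro x
    rw [sum_ite, sum_const, sum_const, filter_eq, filter_ne]
    simp only [mem_univ, ite_true, card_singleton, one_smul, card_erase_of_mem, card_univ,
      nsmul_eq_mul, mul_one, Nat.cast_sub Fintype.card_pos]
    ring
  zify at hpairs
  rw [hpairs]
  simp only [hrow, sum_const, card_univ, nsmul_eq_mul]
  ring

lemma sum_ne_zero_sum_fiberCard_mul_sub_two_sq (F : K → K) :
    ∑ b ∈ univ.filter (fun b : K => b ≠ 0), ∑ a,
        (fiberCard (fun x => F x + b * x) a : ℤ) * (fiberCard (fun x => F x + b * x) a - 2) ^ 2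
      = ∑ b ∈ univ.filter (fun b : K => b ≠ 0), ∑ a,
          (fiberCard (fun x => F x + b * x) a : ℤ) ^ 3
        + 4 * ∑ a, (fiberCard F a : ℤ) ^ 2 - 4 * Fintype.card K ^ 2 := by
  have hsq : ∑ b ∈ univ.filter (fun b : K => b ≠ 0), ∑ a,
      (fiberCard (fun x => F x + b * x) a : ℤ) ^ 2
        = 2 * Fintype.card K ^ 2 - Fintype.card K - ∑ a, (fiberCard F a : ℤ) ^ 2 := by
    rw [filter_ne', sum_erase_eq_sub (mem_univ 0), sum_sum_fiberCard_add_mul_sq]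
    simp only [zero_mul, add_zero]
  have hlin : ∑ b ∈ univ.filter (fun b : K => b ≠ 0), ∑ a,
      (fiberCard (fun x => F x + b * x) a : ℤ) = (Fintype.card K - 1) * Fintype.card K := by
    simp only [← Nat.cast_sum, sum_fiberCard, sum_const, filter_ne', card_erase_of_mem (mem_univ _),
      card_univ, smul_eq_mul]
    rw [Nat.cast_mul, Nat.cast_sub Fintype.card_pos, Nat.cast_one]
  have hexpand : ∀ m : ℤ, m * (m - 2) ^ 2 = m ^ 3 - 4 * m ^ 2 + 4 * m := fun m => by ring
  simp only [hexpand, sum_add_distrib, sum_sub_distrib, ← mul_sum]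
  linear_combination (-4) * hsq + 4 * hlin

end Field

noncomputable def traceChar (n : ℕ) : AddChar (GaloisField 2 n) ℤ where
  toFun x := (-1) ^ (tr n x).val
  map_zero_eq_one' := by simp [tr]
  map_add_eq_mul' x y := by
    simp only [tr, map_add, ZMod.val_add]
    rw [← neg_one_pow_eq_pow_mod_two, pow_add]

lemma traceChar_isPrimitive (n : ℕ) : (traceChar n).IsPrimitive := by
  intro a ha h
  obtain ⟨y, hy⟩ := Algebra.trace_surjective (ZMod 2) (GaloisField 2 n) 1
  have hy' := DFunLike.congr_fun h (a⁻¹ * y)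
  rw [AddChar.mulShift_apply, mul_inv_cancel_left₀ ha, AddChar.one_apply] at hy'
  simp [traceChar, tr, hy, ZMod.val_one] at hy'

lemma W_mul_eq_charSum (n : ℕ) (F : GaloisField 2 n → GaloisField 2 n) (b v : GaloisField 2 n) :
    W n F (b * v) v = charSum (traceChar n) (fun x => F x + b * x) v := by
  refine sum_congr rfl fun x _ => ?_
  simp only [traceChar, AddChar.coe_mk, tr, mul_add, map_add, mul_assoc, mul_left_comm b v x]

lemma W_zero_eq_charSum (n : ℕ) (F : GaloisField 2 n → GaloisField 2 n) (v : GaloisField 2 n) :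
    W n F 0 v = charSum (traceChar n) F v := by
  simpa using W_mul_eq_charSum n F 0 v

lemma isOPoly_iff_fiberCard (n : ℕ) (F : GaloisField 2 n → GaloisField 2 n) :
    IsOPoly n F ↔ ∀ b ≠ 0, ∀ a,
      fiberCard (fun x => F x + b * x) a = 0 ∨ fiberCard (fun x => F x + b * x) a = 2 := by
  simp only [IsOPoly, Nat.card_eq_fintype_card, Fintype.card_subtype, fiberCard]

lemma natCast_mul_sub_two_sq_eq_zero_iff (m : ℕ) : (m : ℤ) * (m - 2) ^ 2 = 0 ↔ m = 0 ∨ m = 2 := by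
  simp only [mul_eq_zero, pow_eq_zero_iff two_ne_zero, sub_eq_zero, Nat.cast_eq_zero]
  omega

theorem o_polynomial_walsh_characterization (n : ℕ) (hn : 0 < n)
    (F : GaloisField 2 n → GaloisField 2 n) :
    (∑ b ∈ univ.filter (fun b : GaloisField 2 n => b ≠ 0),
        ∑ v₁ : GaloisField 2 n, ∑ v₂ : GaloisField 2 n,
          W n F (b * v₁) v₁ * W n F (b * v₂) v₂ * W n F (b * (v₁ + v₂)) (v₁ + v₂)
      + 2 ^ (n + 2) *
          ∑ v ∈ univ.filter (fun v : GaloisField 2 n => v ≠ 0), W n F 0 v ^ 2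
      - 2 ^ (4 * n + 2) + 2 ^ (3 * n + 2) ≥ 0) ∧
    (∑ b ∈ univ.filter (fun b : GaloisField 2 n => b ≠ 0),
        ∑ v₁ : GaloisField 2 n, ∑ v₂ : GaloisField 2 n,
          W n F (b * v₁) v₁ * W n F (b * v₂) v₂ * W n F (b * (v₁ + v₂)) (v₁ + v₂)
      + 2 ^ (n + 2) *
          ∑ v ∈ univ.filter (fun v : GaloisField 2 n => v ≠ 0), W n F 0 v ^ 2
      - 2 ^ (4 * n + 2) + 2 ^ (3 * n + 2) = 0 ↔ IsOPoly n F) := by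
  have hq : (Fintype.card (GaloisField 2 n) : ℤ) = 2 ^ n := by
    rw [← Nat.card_eq_fintype_card, GaloisField.card 2 n hn.ne', Nat.cast_pow, Nat.cast_ofNat]
  have hψ := traceChar_isPrimitive n
  have htriple : ∀ b : GaloisField 2 n, ∑ v₁, ∑ v₂,
      W n F (b * v₁) v₁ * W n F (b * v₂) v₂ * W n F (b * (v₁ + v₂)) (v₁ + v₂)
        = (2 ^ n) ^ 2 * ∑ a, (fiberCard (fun x => F x + b * x) a : ℤ) ^ 3 := fun b => by
    simp only [W_mul_eq_charSum]
    rw [sum_charSum_mul_charSum_mul_charSum_add hψ, hq]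
  have hsq : ∑ v ∈ univ.filter (fun v : GaloisField 2 n => v ≠ 0), W n F 0 v ^ 2
      = 2 ^ n * ∑ a, (fiberCard F a : ℤ) ^ 2 - (2 ^ n) ^ 2 := by
    simp only [W_zero_eq_charSum]
    rw [filter_ne', sum_erase_eq_sub (mem_univ 0), sum_charSum_sq hψ, charSum_zero, hq]
  have hpoly : ∀ T Q : ℤ, (2 ^ n) ^ 2 * T + 2 ^ (n + 2) * (2 ^ n * Q - (2 ^ n) ^ 2)
      - 2 ^ (4 * n + 2) + 2 ^ (3 * n + 2) = (2 ^ n) ^ 2 * (T + 4 * Q - 4 * (2 ^ n) ^ 2) :=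
    fun T Q => by ring
  rw [sum_congr rfl fun b _ => htriple b, hsq, ← mul_sum, hpoly, ← hq,
    ← sum_ne_zero_sum_fiberCard_mul_sub_two_sq, isOPoly_iff_fiberCard]
  refine ⟨by positivity, ?_⟩
  have hnonneg : ∀ m : ℕ, 0 ≤ (m : ℤ) * (m - 2) ^ 2 := fun m => by positivity
  rw [mul_eq_zero, or_iff_right (by positivity),
    sum_eq_zero_iff_of_nonneg fun b _ => sum_nonneg fun a _ => hnonneg _]
  simp only [mem_filter, mem_univ, true_and]
  refine forall₂_congr fun b _ => ?_
  simp only [sum_eq_zero_iff_of_nonneg fun a _ => hnonneg _, mem_univ, true_implies,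
    natCast_mul_sub_two_sq_eq_zero_iff]
end

section
/- Let F : F_{2^n} → F_{2^n} be an o-polynomial. Then Σ_{b ∈ F_{2^n}^*} Σ_{v ∈ F_{2^n}} W_F(bv, v)^2 = (2^n − 1)·2^{2n+1}. -/
open scoped Classical
open Finset

lemma pow_val_mul : ∀ a b : ZMod 2,
    (-1:ℤ)^a.val * (-1)^b.val = (-1)^(a+b).val := by decide

lemma tr_add (n : ℕ) (a b : GaloisField 2 n) : tr n (a+b) = tr n a + tr n b :=
  map_add _ a b

lemma char_sum (n : ℕ) (c : GaloisField 2 n) :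
    ∑ v : GaloisField 2 n, (-1:ℤ)^(tr n (v * c)).val =
      if c = 0 then (Fintype.card (GaloisField 2 n) : ℤ) else 0 := by
  split_ifs with hc
  · subst hc
    simp [tr]
  · obtain ⟨w, hw⟩ := Algebra.trace_surjective (ZMod 2) (GaloisField 2 n) 1
    set v0 := w * c⁻¹ with hv0def
    have hv0 : tr n (v0 * c) = 1 := by
      rw [hv0def, mul_assoc, inv_mul_cancel₀ hc, mul_one]
      exact hw
    have key : ∑ v : GaloisField 2 n, (-1:ℤ)^(tr n ((v + v0) * c)).val
        = ∑ v : GaloisField 2 n, (-1:ℤ)^(tr n (v * c)).val :=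
      Fintype.sum_equiv (Equiv.addRight v0) _ _ (fun v => rfl)
    have step : ∀ v : GaloisField 2 n,
        (-1:ℤ)^(tr n ((v + v0) * c)).val = -((-1:ℤ)^(tr n (v * c)).val) := by
      intro v
      rw [add_mul, tr_add, ← pow_val_mul, hv0]
      generalize tr n (v * c) = t
      revert t
      decide
    rw [Finset.sum_congr rfl (fun v _ => step v)] at key
    rw [Finset.sum_neg_distrib] at key
    linarith
lemma fiber_two (n : ℕ) (F : GaloisField 2 n → GaloisField 2 n) (hF : IsOPoly n F)
    (b : GaloisField 2 n) (hb : b ≠ 0) (x : GaloisField 2 n) :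
    (univ.filter (fun y : GaloisField 2 n => F y + b * y = F x + b * x)).card = 2 := by
  have h := (hF b hb (F x + b * x)).resolve_left (by
    have : Nonempty {y : GaloisField 2 n // F y + b * y = F x + b * x} := ⟨⟨x, rfl⟩⟩
    exact Nat.card_pos.ne')
  rw [Nat.card_eq_fintype_card, Fintype.card_subtype] at h
  exact h

theorem o_polynomial_total_square_walsh_sum (n : ℕ) (hn : 0 < n)
    (F : GaloisField 2 n → GaloisField 2 n) (hF : IsOPoly n F) :
    ∑ b ∈ univ.filter (fun b : GaloisField 2 n => b ≠ 0),
        ∑ v : GaloisField 2 n, W n F (b * v) v ^ 2 =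
      ((2 : ℤ) ^ n - 1) * 2 ^ (2 * n + 1) := by
  have hcard : Fintype.card (GaloisField 2 n) = 2 ^ n := by
    rw [Fintype.card_eq_nat_card]; exact GaloisField.card 2 n hn.ne'
  have inner : ∀ b : GaloisField 2 n, b ≠ 0 →
      ∑ v : GaloisField 2 n, W n F (b * v) v ^ 2 = 2 ^ (2 * n + 1) := by
    intro b hb
    have expand : ∀ v : GaloisField 2 n, W n F (b * v) v ^ 2 =
        ∑ x : GaloisField 2 n, ∑ y : GaloisField 2 n,
          (-1:ℤ)^(tr n (v * ((F x + b * x) + (F y + b * y)))).val := by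
      intro v
      rw [sq, W, Finset.sum_mul_sum]
      refine Finset.sum_congr rfl fun x _ => Finset.sum_congr rfl fun y _ => ?_
      rw [pow_val_mul]
      congr 1
      have h1 : b * v * x = v * (b * x) := by ring
      have h2 : b * v * y = v * (b * y) := by ring
      rw [h1, h2]
      simp only [mul_add, tr_add]
    calc ∑ v : GaloisField 2 n, W n F (b * v) v ^ 2
        = ∑ v : GaloisField 2 n, ∑ x : GaloisField 2 n, ∑ y : GaloisField 2 n,
            (-1:ℤ)^(tr n (v * ((F x + b * x) + (F y + b * y)))).val :=
          Finset.sum_congr rfl fun v _ => expand v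
      _ = ∑ x : GaloisField 2 n, ∑ y : GaloisField 2 n, ∑ v : GaloisField 2 n,
            (-1:ℤ)^(tr n (v * ((F x + b * x) + (F y + b * y)))).val := by
          rw [Finset.sum_comm]
          exact Finset.sum_congr rfl fun x _ => Finset.sum_comm
      _ = ∑ x : GaloisField 2 n, ∑ y : GaloisField 2 n,
            (if F y + b * y = F x + b * x then ((2:ℤ)^n) else 0) := by
          refine Finset.sum_congr rfl fun x _ => Finset.sum_congr rfl fun y _ => ?_
          rw [char_sum, hcard]
          have : (F x + b * x) + (F y + b * y) = 0 ↔ F y + b * y = F x + b * x := by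
            constructor
            · intro h
              have := congrArg (· + (F y + b * y)) h
              simpa [add_assoc, CharTwo.add_self_eq_zero] using this.symm
            · intro h
              rw [h, CharTwo.add_self_eq_zero]
          simp only [this]
          push_cast
          rfl
      _ = ∑ x : GaloisField 2 n, (2:ℤ)^(n+1) := by
          refine Finset.sum_congr rfl fun x _ => ?_
          rw [← Finset.sum_filter, Finset.sum_const, fiber_two n F hF b hb x]
          ring
      _ = 2 ^ (2 * n + 1) := by
          rw [Finset.sum_const, Finset.card_univ, hcard, nsmul_eq_mul]
          push_cast
          ring
  rw [Finset.sum_congr rfl (fun b hb => inner b (Finset.mem_filter.mp hb).2),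
      Finset.sum_const, Finset.filter_ne', Finset.card_erase_of_mem (Finset.mem_univ 0),
      Finset.card_univ, hcard, nsmul_eq_mul]
  have h1 : (1:ℕ) ≤ 2 ^ n := Nat.one_le_two_pow
  push_cast [h1]
  ring
end

section
/- If F : F_{2^n} → F_{2^n} is such that for every nonzero b and every a the equation F(x) + bx = a has 0 or 2 solutions, then F is a permutation of F_{2^n}. -/
open scoped Classical
open Finset

theorem zero_or_two_solutions_implies_permutation (n : ℕ) (hn : 0 < n)
    (F : GaloisField 2 n → GaloisField 2 n)
    (hF : ∀ b : GaloisField 2 n, b ≠ 0 → ∀ a : GaloisField 2 n,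
      Nat.card {x : GaloisField 2 n // F x + b * x = a} = 0 ∨
      Nat.card {x : GaloisField 2 n // F x + b * x = a} = 2) :
    Function.Bijective F := by
  rw [← Finite.injective_iff_bijective]
  intro x y hxy
  by_contra hne
  have hyx : y ≠ x := fun h => hne h.symm
  -- for each nonzero b, there is another solution z ≠ x of F z + b z = F x + b x
  have exist : ∀ b : GaloisField 2 n, b ≠ 0 →
      ∃ z, z ≠ x ∧ F z + b * z = F x + b * x := by
    intro b hb
    have h2 : Nat.card {z : GaloisField 2 n // F z + b * z = F x + b * x} = 2 := by
      rcases hF b hb (F x + b * x) with h | h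
      · have : Nonempty {z : GaloisField 2 n // F z + b * z = F x + b * x} := ⟨⟨x, rfl⟩⟩
        have := Nat.card_pos (α := {z : GaloisField 2 n // F z + b * z = F x + b * x})
        omega
      · exact h
    rw [Nat.card_eq_two_iff] at h2
    obtain ⟨a, c, hac, huniv⟩ := h2
    have hx : (⟨x, rfl⟩ : {z : GaloisField 2 n // F z + b * z = F x + b * x}) ∈
        (Set.univ : Set _) := Set.mem_univ _
    rw [← huniv] at hx
    rcases hx with hx | hx
    · refine ⟨c.1, ?_, c.2⟩
      intro h
      apply hac
      rw [← hx]
      exact (Subtype.ext h.symm)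
    · have hx' : (⟨x, rfl⟩ : {z : GaloisField 2 n // F z + b * z = F x + b * x}) = c := hx
      refine ⟨a.1, ?_, a.2⟩
      intro h
      apply hac
      rw [← hx']
      exact (Subtype.ext h)
  -- the map sending b to that other solution
  let f : {b : GaloisField 2 n // b ≠ 0} → {z : GaloisField 2 n // z ≠ x} :=
    fun b => ⟨(exist b.1 b.2).choose, (exist b.1 b.2).choose_spec.1⟩
  have hfspec : ∀ b : {b : GaloisField 2 n // b ≠ 0},
      F (f b).1 + b.1 * (f b).1 = F x + b.1 * x :=
    fun b => (exist b.1 b.2).choose_spec.2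
  have hinj : Function.Injective f := by
    intro b1 b2 h
    have hz : (f b1).1 = (f b2).1 := congrArg Subtype.val h
    have e1 := hfspec b1
    have e2 := hfspec b2
    rw [hz] at e1
    set z := (f b2).1 with hzdef
    have hzx : z ≠ x := (f b2).2
    -- e1 : F z + b1 z = F x + b1 x, e2 : F z + b2 z = F x + b2 x
    have : (b1.1 - b2.1) * (z - x) = 0 := by ring_nf; linear_combination e1 - e2
    rcases mul_eq_zero.mp this with h' | h'
    · exact Subtype.ext (sub_eq_zero.mp h')
    · exact absurd (sub_eq_zero.mp h') hzx
  have hcard : Fintype.card {b : GaloisField 2 n // b ≠ 0} =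
      Fintype.card {z : GaloisField 2 n // z ≠ x} := by
    simp [Fintype.card_subtype_compl]
  have hsurj : Function.Surjective f :=
    ((Fintype.bijective_iff_injective_and_card f).mpr ⟨hinj, hcard⟩).2
  obtain ⟨b, hb⟩ := hsurj ⟨y, hyx⟩
  have hy : (f b).1 = y := congrArg Subtype.val hb
  have e := hfspec b
  rw [hy] at e
  -- e : F y + b y = F x + b x, with F x = F y
  rw [← hxy] at e
  have : b.1 * (y - x) = 0 := by linear_combination e
  rcases mul_eq_zero.mp this with h' | h'
  · exact b.2 h'
  · exact hyx (sub_eq_zero.mp h')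
end
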